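/- arXiv:2406.00519 — 5 statements merged into one kernel-verified Lean document; each statement's English description precedes it below -/
import Mathlib

section
/- Let X be a topological space, let I and J be finite nonempty index types, and let A : I → Set X and B : J → Set X be families of subsets of X such that every A i and every B j is nonempty, connected, and closed in X, the sets A i are pairwise disjoint, the sets B j are pairwise disjoint, and ⋃ i, A i = ⋃ j, B j. Then there exists a bijection e : I ≃ J such that A i = B (e i) for every i ∈ I. -/
/-- A connected set contained in a finite union of pairwise disjoint closed sets
lies in one of them. -/
lemma conn_subset_of_disjoint_closed {X : Type*} [TopologicalSpace X] {J : Type*}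
    [Finite J] {s : Set X} (hs : IsConnected s) (C : J → Set X)
    (hcl : ∀ j, IsClosed (C j)) (hd : ∀ j j', j ≠ j' → C j ∩ C j' = ∅)
    (hsub : s ⊆ ⋃ j, C j) : ∃ j, s ⊆ C j := by
  obtain ⟨x, hx⟩ := hs.nonempty
  obtain ⟨j, hxj⟩ := Set.mem_iUnion.mp (hsub hx)
  refine ⟨j, ?_⟩
  by_contra h
  obtain ⟨y, hy, hyj⟩ := Set.not_subset.mp h
  obtain ⟨j', hyj'⟩ := Set.mem_iUnion.mp (hsub hy)
  have hjj' : j' ≠ j := fun e => hyj (e ▸ hyj')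
  set v : Set X := ⋃ j' ∈ ({j}ᶜ : Set J), C j' with hv
  have hvcl : IsClosed v := by
    apply Set.Finite.isClosed_biUnion (Set.toFinite _)
    intro i _; exact hcl i
  have hcov : s ⊆ C j ∪ v := by
    intro z hz
    obtain ⟨k, hk⟩ := Set.mem_iUnion.mp (hsub hz)
    by_cases hkj : k = j
    · exact Or.inl (hkj ▸ hk)
    · exact Or.inr (Set.mem_biUnion hkj hk)
  have h1 : (s ∩ C j).Nonempty := ⟨x, hx, hxj⟩
  have h2 : (s ∩ v).Nonempty := ⟨y, hy, Set.mem_biUnion hjj' hyj'⟩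
  obtain ⟨z, _, hz1, hz2⟩ :=
    (isPreconnected_closed_iff.mp hs.isPreconnected) (C j) v (hcl j) hvcl hcov h1 h2
  obtain ⟨k, hk, hzk⟩ := Set.mem_iUnion₂.mp hz2
  have := hd j k (fun e => hk e.symm)
  exact absurd (Set.mem_inter hz1 hzk) (by rw [this]; exact Set.notMem_empty z)

/-- Two finite families of nonempty, pairwise disjoint, closed, connected sets with
the same union coincide up to a relabeling. -/
theorem stmt_0 {X : Type*} [TopologicalSpace X] {I J : Type*}
    [Finite I] [Nonempty I] [Finite J] [Nonempty J]
    (A : I → Set X) (B : J → Set X)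
    (hAne : ∀ i, (A i).Nonempty) (hAconn : ∀ i, IsConnected (A i))
    (hAcl : ∀ i, IsClosed (A i))
    (hBne : ∀ j, (B j).Nonempty) (hBconn : ∀ j, IsConnected (B j))
    (hBcl : ∀ j, IsClosed (B j))
    (hAdisj : ∀ i i', i ≠ i' → A i ∩ A i' = ∅)
    (hBdisj : ∀ j j', j ≠ j' → B j ∩ B j' = ∅)
    (hU : ⋃ i, A i = ⋃ j, B j) :
    ∃ e : I ≃ J, ∀ i, A i = B (e i) := by
  have hf : ∀ i, ∃ j, A i ⊆ B j := fun i =>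
    conn_subset_of_disjoint_closed (hAconn i) B hBcl hBdisj
      (hU ▸ Set.subset_iUnion A i)
  have hg : ∀ j, ∃ i, B j ⊆ A i := fun j =>
    conn_subset_of_disjoint_closed (hBconn j) A hAcl hAdisj
      (hU ▸ Set.subset_iUnion B j)
  choose f hfs using hf
  choose g hgs using hg
  have hgf : ∀ i, g (f i) = i := by
    intro i
    by_contra h
    have hsub : A i ⊆ A (g (f i)) := (hfs i).trans (hgs (f i))
    obtain ⟨x, hx⟩ := hAne i
    have := hAdisj (g (f i)) i h
    exact absurd (Set.mem_inter (hsub hx) hx) (by rw [this]; exact Set.notMem_empty x)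
  have hfg : ∀ j, f (g j) = j := by
    intro j
    by_contra h
    have hsub : B j ⊆ B (f (g j)) := (hgs j).trans (hfs (g j))
    obtain ⟨x, hx⟩ := hBne j
    have := hBdisj (f (g j)) j h
    exact absurd (Set.mem_inter (hsub hx) hx) (by rw [this]; exact Set.notMem_empty x)
  refine ⟨⟨f, g, hgf, hfg⟩, fun i => ?_⟩
  refine Set.Subset.antisymm (hfs i) ?_
  have := hgs (f i)
  rwa [hgf i] at this
end

section
/- Let m, n ≥ 1 and let P ∈ ℝ^{m×n} be a joint probability matrix. Then the nonnegative rank of P equals the smallest natural number p for which there exist a probability vector w ∈ ℝ^p and probability vectors a_1, …, a_p ∈ ℝ^m and b_1, …, b_p ∈ ℝ^n such that P i j = ∑_{r=1}^{p} w_r · (a_r)_i · (b_r)_j for all i, j. -/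
/-- The nonnegative rank of a nonnegative matrix: the smallest `p` admitting a
factorization into nonnegative `m × p` and `p × n` matrices. -/
noncomputable def nnRank {α β : Type*} [Fintype α] [Fintype β]
    (M : Matrix α β ℝ) : ℕ :=
  sInf {p : ℕ | ∃ (B : Matrix α (Fin p) ℝ) (C : Matrix (Fin p) β ℝ),
    (∀ i r, 0 ≤ B i r) ∧ (∀ r j, 0 ≤ C r j) ∧ M = B * C}

/-- Cohen–Rothblum characterization: the nonnegative rank of a joint probability
matrix is the smallest number of rank-one joint probability matrices whose convex
combination equals it. -/
theorem stmt_6 {m n : ℕ} (hm : 1 ≤ m) (hn : 1 ≤ n)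
    (P : Matrix (Fin m) (Fin n) ℝ)
    (hP0 : ∀ i j, 0 ≤ P i j) (hP1 : ∑ i, ∑ j, P i j = 1) :
    IsLeast {p : ℕ |
      ∃ (w : Fin p → ℝ) (a : Fin p → Fin m → ℝ) (b : Fin p → Fin n → ℝ),
        (∀ r, 0 ≤ w r) ∧ (∑ r, w r) = 1 ∧
        (∀ r, (∀ i, 0 ≤ a r i) ∧ (∑ i, a r i) = 1) ∧
        (∀ r, (∀ j, 0 ≤ b r j) ∧ (∑ j, b r j) = 1) ∧
        (∀ i j, P i j = ∑ r, w r * a r i * b r j)}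
      (nnRank P) := by
  constructor
  · -- membership : normalize an optimal factorization
    have hmem : (nnRank P) ∈ {p : ℕ | ∃ (B : Matrix (Fin m) (Fin p) ℝ)
        (C : Matrix (Fin p) (Fin n) ℝ),
        (∀ i r, 0 ≤ B i r) ∧ (∀ r j, 0 ≤ C r j) ∧ P = B * C} := by
      apply Nat.sInf_mem
      refine ⟨n, P, 1, hP0, ?_, by simp⟩
      intro r j
      by_cases h : r = j <;> simp [Matrix.one_apply, h]
    set p := nnRank P with hp
    obtain ⟨B, C, hB, hC, hBC⟩ := hmem
    set sB : Fin p → ℝ := fun r => ∑ i, B i r with hsB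
    set sC : Fin p → ℝ := fun r => ∑ j, C r j with hsC
    have hsB0 : ∀ r, 0 ≤ sB r := fun r => Finset.sum_nonneg fun i _ => hB i r
    have hsC0 : ∀ r, 0 ≤ sC r := fun r => Finset.sum_nonneg fun j _ => hC r j
    have hBzero : ∀ r, sB r = 0 → ∀ i, B i r = 0 := by
      intro r hr i
      exact (Finset.sum_eq_zero_iff_of_nonneg (fun i _ => hB i r)).1 hr i (by simp)
    have hCzero : ∀ r, sC r = 0 → ∀ j, C r j = 0 := by
      intro r hr j
      exact (Finset.sum_eq_zero_iff_of_nonneg (fun j _ => hC r j)).1 hr j (by simp)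
    refine ⟨fun r => sB r * sC r,
      fun r i => if sB r = 0 then (if i = ⟨0, hm⟩ then 1 else 0) else B i r / sB r,
      fun r j => if sC r = 0 then (if j = ⟨0, hn⟩ then 1 else 0) else C r j / sC r,
      fun r => mul_nonneg (hsB0 r) (hsC0 r), ?_, ?_, ?_, ?_⟩
    · have : ∀ r, sB r * sC r = ∑ i, ∑ j, B i r * C r j := by
        intro r
        rw [hsB, hsC, Finset.sum_mul_sum]
      rw [Finset.sum_congr rfl fun r _ => this r]
      rw [Finset.sum_comm]
      have : ∀ i : Fin m, ∑ r, ∑ j, B i r * C r j = ∑ j, P i j := by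
        intro i
        rw [Finset.sum_comm]
        refine Finset.sum_congr rfl fun j _ => ?_
        rw [hBC, Matrix.mul_apply]
      rw [Finset.sum_congr rfl fun i _ => this i, hP1]
    · intro r
      by_cases h : sB r = 0
      · constructor
        · intro i; simp only [h, if_true]; split <;> norm_num
        · simp [h]
      · constructor
        · intro i; simp only [h, if_false]; exact div_nonneg (hB i r) (hsB0 r)
        · simp only [h, if_false, ← Finset.sum_div]
          exact div_self h
    · intro r
      by_cases h : sC r = 0
      · constructor
        · intro j; simp only [h, if_true]; split <;> norm_num
        · simp [h]
      · constructor
        · intro j; simp only [h, if_false]; exact div_nonneg (hC r j) (hsC0 r)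
        · simp only [h, if_false, ← Finset.sum_div]
          exact div_self h
    · intro i j
      rw [hBC, Matrix.mul_apply]
      refine Finset.sum_congr rfl fun r _ => ?_
      by_cases h1 : sB r = 0
      · simp [h1, hBzero r h1 i]
      by_cases h2 : sC r = 0
      · simp [h2, hCzero r h2 j]
      simp only [h1, h2, if_false]
      field_simp
  · -- lower bound
    rintro p ⟨w, a, b, hw0, hw1, ha, hb, hPab⟩
    apply Nat.sInf_le
    refine ⟨fun i r => w r * a r i, fun r j => b r j,
      fun i r => mul_nonneg (hw0 r) ((ha r).1 i),
      fun r j => (hb r).1 j, ?_⟩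
    ext i j
    exact hPab i j
end

section
/- Let m, n ≥ 1 and let P ∈ ℝ^{m×n} be a joint probability matrix. Suppose P = B·C where B ∈ ℝ^{m×p} and C ∈ ℝ^{p×n} have nonnegative entries. Then there exist a probability vector w ∈ ℝ^p and probability vectors a_1, …, a_p ∈ ℝ^m and b_1, …, b_p ∈ ℝ^n such that P i j = ∑_{r=1}^{p} w_r · (a_r)_i · (b_r)_j for all i, j. -/
/-- Normalization lemma: any nonnegative factorization `P = B * C` of a joint
probability matrix can be converted into a convex combination of outer products of
probability vectors with the same inner dimension. -/
theorem stmt_7 {m n p : ℕ} (hm : 1 ≤ m) (hn : 1 ≤ n)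
    (P : Matrix (Fin m) (Fin n) ℝ)
    (hP0 : ∀ i j, 0 ≤ P i j) (hP1 : ∑ i, ∑ j, P i j = 1)
    (B : Matrix (Fin m) (Fin p) ℝ) (C : Matrix (Fin p) (Fin n) ℝ)
    (hB0 : ∀ i r, 0 ≤ B i r) (hC0 : ∀ r j, 0 ≤ C r j)
    (hfac : P = B * C) :
    ∃ (w : Fin p → ℝ) (a : Fin p → Fin m → ℝ) (b : Fin p → Fin n → ℝ),
      (∀ r, 0 ≤ w r) ∧ (∑ r, w r) = 1 ∧
      (∀ r, (∀ i, 0 ≤ a r i) ∧ (∑ i, a r i) = 1) ∧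
      (∀ r, (∀ j, 0 ≤ b r j) ∧ (∑ j, b r j) = 1) ∧
      (∀ i j, P i j = ∑ r, w r * a r i * b r j) := by
  classical
  have hm0 : (m : ℝ) ≠ 0 := Nat.cast_ne_zero.mpr (by omega)
  have hn0 : (n : ℝ) ≠ 0 := Nat.cast_ne_zero.mpr (by omega)
  set s : Fin p → ℝ := fun r => ∑ i, B i r with hs
  set t : Fin p → ℝ := fun r => ∑ j, C r j with ht
  have hs0 : ∀ r, 0 ≤ s r := fun r => Finset.sum_nonneg fun i _ => hB0 i r
  have ht0 : ∀ r, 0 ≤ t r := fun r => Finset.sum_nonneg fun j _ => hC0 r j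
  have hBzero : ∀ r, s r = 0 → ∀ i, B i r = 0 := by
    intro r hr i
    exact (Finset.sum_eq_zero_iff_of_nonneg (fun i _ => hB0 i r)).mp hr i (Finset.mem_univ i)
  have hCzero : ∀ r, t r = 0 → ∀ j, C r j = 0 := by
    intro r hr j
    exact (Finset.sum_eq_zero_iff_of_nonneg (fun j _ => hC0 r j)).mp hr j (Finset.mem_univ j)
  refine ⟨fun r => s r * t r,
    fun r i => if s r = 0 then (m : ℝ)⁻¹ else B i r / s r,
    fun r j => if t r = 0 then (n : ℝ)⁻¹ else C r j / t r, ?_, ?_, ?_, ?_, ?_⟩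
  · exact fun r => mul_nonneg (hs0 r) (ht0 r)
  · have h1 : ∑ i, ∑ j, ∑ r, B i r * C r j = 1 := by
      rw [hfac] at hP1
      simpa [Matrix.mul_apply] using hP1
    calc ∑ r, s r * t r = ∑ r, ∑ i, ∑ j, B i r * C r j := by
          refine Finset.sum_congr rfl fun r _ => ?_
          rw [hs, ht]
          rw [Finset.sum_mul]
          exact Finset.sum_congr rfl fun i _ => Finset.mul_sum _ _ _
      _ = ∑ i, ∑ j, ∑ r, B i r * C r j := by
          rw [Finset.sum_comm]
          exact Finset.sum_congr rfl fun i _ => Finset.sum_comm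
      _ = 1 := h1
  · intro r
    by_cases hr : s r = 0
    · simp [hr, Finset.card_univ, hm0]
    · constructor
      · intro i; simp only [hr, if_false]
        exact div_nonneg (hB0 i r) (hs0 r)
      · simp only [hr, if_false, ← Finset.sum_div]
        exact div_self hr
  · intro r
    by_cases hr : t r = 0
    · simp [hr, Finset.card_univ, hn0]
    · constructor
      · intro j; simp only [hr, if_false]
        exact div_nonneg (hC0 r j) (ht0 r)
      · simp only [hr, if_false, ← Finset.sum_div]
        exact div_self hr
  · intro i j
    rw [hfac]
    simp only [Matrix.mul_apply]
    refine Finset.sum_congr rfl fun r _ => ?_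
    by_cases hr : s r = 0
    · simp [hr, hBzero r hr i]
    · by_cases hr' : t r = 0
      · simp [hr', hCzero r hr' j]
      · simp only [hr, hr', if_false]
        field_simp
end

section
/- Let m, n ≥ 1 and let P ∈ ℝ^{m×n} be a joint probability matrix with nonnegative rank p. Then there exists a probability mass function q on Fin m × Fin n × Fin p (q ≥ 0 and summing to 1) such that ∑_{l} q(i,j,l) = P i j for all i, j, and q satisfies the conditional independence condition: for all i, j, l, q(i,j,l) · (∑_{i',j'} q(i',j',l)) = (∑_{j'} q(i,j',l)) · (∑_{i'} q(i',j,l)). -/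
/-- Lower-bound direction of Theorem 2: a joint probability matrix of nonnegative rank
`p` admits a latent variable with `p` states conditioning on which renders the two
observed variables independent. -/
theorem stmt_9 {m n p : ℕ} (hm : 1 ≤ m) (hn : 1 ≤ n)
    (P : Matrix (Fin m) (Fin n) ℝ)
    (hP0 : ∀ i j, 0 ≤ P i j) (hP1 : ∑ i, ∑ j, P i j = 1)
    (hrank : nnRank P = p) :
    ∃ q : Fin m × Fin n × Fin p → ℝ,
      (∀ x, 0 ≤ q x) ∧
      (∑ i, ∑ j, ∑ l, q (i, j, l) = 1) ∧
      (∀ i j, ∑ l, q (i, j, l) = P i j) ∧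
      (∀ (i : Fin m) (j : Fin n) (l : Fin p),
        q (i, j, l) * (∑ i', ∑ j', q (i', j', l)) =
          (∑ j', q (i, j', l)) * (∑ i', q (i', j, l))) := by
  -- The defining set of `nnRank P` is nonempty: `P = P * 1` works with `p = n`.
  have hne : {k : ℕ | ∃ (B : Matrix (Fin m) (Fin k) ℝ) (C : Matrix (Fin k) (Fin n) ℝ),
      (∀ i r, 0 ≤ B i r) ∧ (∀ r j, 0 ≤ C r j) ∧ P = B * C}.Nonempty := by
    refine ⟨n, P, 1, hP0, ?_, (Matrix.mul_one P).symm⟩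
    intro r j
    by_cases h : r = j
    · simp [Matrix.one_apply, h]
    · simp [Matrix.one_apply, h]
  have hmem := Nat.sInf_mem hne
  rw [show sInf _ = nnRank P from rfl, hrank] at hmem
  obtain ⟨B, C, hB, hC, hBC⟩ := hmem
  refine ⟨fun x => B x.1 x.2.2 * C x.2.2 x.2.1, fun x => mul_nonneg (hB _ _) (hC _ _), ?_, ?_, ?_⟩
  · have key : ∀ i j, ∑ l, B i l * C l j = P i j := by
      intro i j
      rw [hBC]
      simp [Matrix.mul_apply]
    simp only [key]
    exact hP1
  · intro i j
    rw [hBC]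
    simp [Matrix.mul_apply]
  · intro i j l
    have h1 : ∑ i' : Fin m, ∑ j' : Fin n, B i' l * C l j'
        = (∑ i' : Fin m, B i' l) * (∑ j' : Fin n, C l j') := by
      rw [Finset.sum_mul]
      exact Finset.sum_congr rfl fun i' _ => by rw [Finset.mul_sum]
    have h2 : ∑ j' : Fin n, B i l * C l j' = B i l * ∑ j' : Fin n, C l j' :=
      (Finset.mul_sum _ _ _).symm
    have h3 : ∑ i' : Fin m, B i' l * C l j = (∑ i' : Fin m, B i' l) * C l j :=
      (Finset.sum_mul _ _ _).symm
    rw [h1, h2, h3]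
    ring
end

section
/- Let m, n ≥ 1 and let P ∈ ℝ^{m×n} be a joint probability matrix. Then the nonnegative rank of P equals the least natural number R such that there exists a probability mass function q on Fin m × Fin n × Fin R (q ≥ 0 and summing to 1) with ∑_{l} q(i,j,l) = P i j for all i, j, and satisfying the conditional independence condition: for all i, j, l, q(i,j,l) · (∑_{i',j'} q(i',j',l)) = (∑_{j'} q(i,j',l)) · (∑_{i'} q(i',j,l)). -/
/-- Probabilistic core of Theorem 2: the nonnegative rank of a joint probability table
equals the minimal number of states of a latent variable conditioning on which renders
the two observed variables independent. -/
theorem stmt_10 {m n : ℕ} (hm : 1 ≤ m) (hn : 1 ≤ n)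
    (P : Matrix (Fin m) (Fin n) ℝ)
    (hP0 : ∀ i j, 0 ≤ P i j) (hP1 : ∑ i, ∑ j, P i j = 1) :
    IsLeast {R : ℕ |
      ∃ q : Fin m × Fin n × Fin R → ℝ,
        (∀ x, 0 ≤ q x) ∧
        (∑ i, ∑ j, ∑ l, q (i, j, l) = 1) ∧
        (∀ i j, ∑ l, q (i, j, l) = P i j) ∧
        (∀ (i : Fin m) (j : Fin n) (l : Fin R),
          q (i, j, l) * (∑ i', ∑ j', q (i', j', l)) =
            (∑ j', q (i, j', l)) * (∑ i', q (i', j, l)))}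
      (nnRank P) := by
  constructor
  · -- membership: take an optimal nonnegative factorization
    have hne : {p : ℕ | ∃ (B : Matrix (Fin m) (Fin p) ℝ) (C : Matrix (Fin p) (Fin n) ℝ),
        (∀ i r, 0 ≤ B i r) ∧ (∀ r j, 0 ≤ C r j) ∧ P = B * C}.Nonempty := by
      refine ⟨m, (1 : Matrix (Fin m) (Fin m) ℝ), P, ?_, hP0, (Matrix.one_mul P).symm⟩
      intro i r
      by_cases h : i = r <;> simp [Matrix.one_apply, h]
    obtain ⟨B, C, hB, hC, hBC⟩ := Nat.sInf_mem hne
    refine ⟨fun x => B x.1 x.2.2 * C x.2.2 x.2.1, fun x => mul_nonneg (hB _ _) (hC _ _),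
      ?_, ?_, ?_⟩
    · show ∑ i, ∑ j, ∑ l, B i l * C l j = 1
      have hmul : ∀ i j, ∑ l, B i l * C l j = P i j := by
        intro i j; rw [← Matrix.mul_apply, ← hBC]
      calc ∑ i, ∑ j, ∑ l, B i l * C l j = ∑ i, ∑ j, P i j :=
            Finset.sum_congr rfl fun i _ => Finset.sum_congr rfl fun j _ => hmul i j
        _ = 1 := hP1
    · intro i j
      show ∑ l, B i l * C l j = P i j
      rw [← Matrix.mul_apply, ← hBC]
    · intro i j l
      show B i l * C l j * (∑ i', ∑ j', B i' l * C l j') =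
        (∑ j', B i l * C l j') * (∑ i', B i' l * C l j)
      have h1 : ∑ i' : Fin m, ∑ j' : Fin n, B i' l * C l j' =
          (∑ i' : Fin m, B i' l) * (∑ j' : Fin n, C l j') := by
        rw [Finset.sum_mul_sum]
      have h2 : ∑ j' : Fin n, B i l * C l j' = B i l * ∑ j' : Fin n, C l j' := by
        rw [Finset.mul_sum]
      have h3 : ∑ i' : Fin m, B i' l * C l j = (∑ i' : Fin m, B i' l) * C l j := by
        rw [Finset.sum_mul]
      rw [h1, h2, h3]; ring
  · -- lower bound
    rintro R ⟨q, hq0, hq1, hqP, hCI⟩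
    apply Nat.sInf_le
    set s : Fin R → ℝ := fun l => ∑ i, ∑ j, q (i, j, l) with hs
    have hs0 : ∀ l, 0 ≤ s l := fun l =>
      Finset.sum_nonneg fun i _ => Finset.sum_nonneg fun j _ => hq0 _
    refine ⟨fun i l => ∑ j, q (i, j, l),
      fun l j => if s l = 0 then 0 else (∑ i, q (i, j, l)) / s l,
      fun i r => Finset.sum_nonneg fun j _ => hq0 _, ?_, ?_⟩
    · intro r j
      dsimp only
      split
      · exact le_refl 0
      · exact div_nonneg (Finset.sum_nonneg fun i _ => hq0 _) (hs0 r)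
    · ext i j
      show P i j = ∑ l, (∑ j', q (i, j', l)) * (if s l = 0 then 0 else (∑ i', q (i', j, l)) / s l)
      have key : ∀ l : Fin R, (∑ j', q (i, j', l)) *
          (if s l = 0 then 0 else (∑ i', q (i', j, l)) / s l) = q (i, j, l) := by
        intro l
        by_cases h : s l = 0
        · have hz : q (i, j, l) = 0 := by
            have h1 : q (i, j, l) ≤ ∑ j', q (i, j', l) :=
              Finset.single_le_sum (f := fun j' => q (i, j', l))
                (fun j' _ => hq0 _) (Finset.mem_univ j)
            have h2 : (∑ j', q (i, j', l)) ≤ s l :=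
              Finset.single_le_sum (f := fun i' => ∑ j', q (i', j', l))
                (fun i' _ => Finset.sum_nonneg fun j' _ => hq0 _) (Finset.mem_univ i)
            have := hq0 (i, j, l)
            have hsl := h
            linarith
          rw [if_pos h, mul_zero, hz]
        · rw [if_neg h]
          rw [mul_div_assoc', ← hCI i j l]
          exact mul_div_cancel_right₀ _ h
      rw [Finset.sum_congr rfl fun l _ => key l]
      exact (hqP i j).symm
end
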